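/- arXiv:1903.08981 — 2 statements merged into one kernel-verified Lean document; each statement's English description precedes it below -/
import Mathlib

section
/- The set M₂ of 8×8 real matrices whose four 4×4 blocks each lie in M is a subring of the ring of 8×8 real matrices, and if B ∈ M₂ is invertible then B⁻¹ ∈ M₂. -/
/-- The allowed nonzero positions (0-indexed) for the sparsity class `M`. -/
def allowPos (a b : ℕ) : Prop :=
  (a = 0 ∧ b = 0) ∨ (a = 0 ∧ b = 3) ∨ (a = 1 ∧ b = 1) ∨ (a = 1 ∧ b = 2) ∨
  (a = 2 ∧ b = 1) ∨ (a = 2 ∧ b = 2) ∨ (a = 3 ∧ b = 0) ∨ (a = 3 ∧ b = 3)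

/-- Membership in the class `M₂` of 8×8 real matrices: each of the four
4×4 blocks lies in the sparsity class `M`. -/
def inM2 (B : Matrix (Fin 8) (Fin 8) ℝ) : Prop :=
  ∀ i j : Fin 8, ¬ allowPos (i.val % 4) (j.val % 4) → B i j = 0

instance : ∀ a b : ℕ, Decidable (allowPos a b) := fun a b => by
  unfold allowPos; infer_instance

/-- classifying function -/
def fcl (i : Fin 8) : Bool := decide (i.val % 4 = 0 ∨ i.val % 4 = 3)

lemma key : ∀ i j : Fin 8, ¬ allowPos (i.val % 4) (j.val % 4) ↔ fcl i ≠ fcl j := by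
  decide

lemma inM2_iff (B : Matrix (Fin 8) (Fin 8) ℝ) :
    inM2 B ↔ ∀ i j : Fin 8, fcl i ≠ fcl j → B i j = 0 := by
  constructor
  · intro h i j hij; exact h i j ((key i j).mpr hij)
  · intro h i j hij; exact h i j ((key i j).mp hij)

/-- the projection matrix -/
noncomputable def Pm : Matrix (Fin 8) (Fin 8) ℝ :=
  Matrix.diagonal (fun i => if fcl i then 1 else 0)

lemma comm_iff (B : Matrix (Fin 8) (Fin 8) ℝ) :
    inM2 B ↔ B * Pm = Pm * B := by
  rw [inM2_iff]
  constructor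
  · intro h
    ext i j
    simp only [Pm, Matrix.mul_diagonal, Matrix.diagonal_mul]
    by_cases hij : fcl i = fcl j
    · rw [hij]; ring
    · rw [h i j hij]; ring
  · intro h i j hij
    have := congrFun (congrFun h i) j
    simp only [Pm, Matrix.mul_diagonal, Matrix.diagonal_mul] at this
    cases hfi : fcl i <;> cases hfj : fcl j <;>
      simp [hfi, hfj] at hij this ⊢ <;> simp [this]

theorem stmt2 :
    (∃ R : Subring (Matrix (Fin 8) (Fin 8) ℝ),
      (R : Set (Matrix (Fin 8) (Fin 8) ℝ)) = {B | inM2 B}) ∧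
    (∀ B : Matrix (Fin 8) (Fin 8) ℝ, inM2 B → IsUnit B → inM2 B⁻¹) := by
  constructor
  · refine ⟨{
      carrier := {B | inM2 B}
      zero_mem' := fun i j _ => rfl
      one_mem' := by rw [Set.mem_setOf_eq, comm_iff, one_mul, mul_one]
      add_mem' := by
        intro a b ha hb
        rw [Set.mem_setOf_eq, comm_iff] at *
        rw [add_mul, mul_add, ha, hb]
      mul_mem' := by
        intro a b ha hb
        rw [Set.mem_setOf_eq, comm_iff] at *
        rw [mul_assoc, hb, ← mul_assoc, ha, mul_assoc]
      neg_mem' := by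
        intro a ha
        rw [Set.mem_setOf_eq, comm_iff] at *
        rw [neg_mul, mul_neg, ha] }, rfl⟩
  · intro B hB hU
    rw [comm_iff] at *
    have hdet : IsUnit B.det := (Matrix.isUnit_iff_isUnit_det B).mp hU
    have h1 : B * B⁻¹ = 1 := Matrix.mul_nonsing_inv B hdet
    have h2 : B⁻¹ * B = 1 := Matrix.nonsing_inv_mul B hdet
    calc B⁻¹ * Pm = B⁻¹ * Pm * B * B⁻¹ := by rw [mul_assoc, h1, mul_one]
      _ = B⁻¹ * (Pm * B) * B⁻¹ := by rw [mul_assoc B⁻¹ Pm B]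
      _ = B⁻¹ * (B * Pm) * B⁻¹ := by rw [hB]
      _ = B⁻¹ * B * Pm * B⁻¹ := by rw [mul_assoc B⁻¹ B Pm]
      _ = Pm * B⁻¹ := by rw [h2, one_mul]
end

section
/- Let M : ℝ → Matrix (Fin 8) (Fin 8) ℝ be continuous with M(s) ∈ M₂ for all s, and let η solve η' = M(s)η with η(0) having zero entries in coordinates 1, 4, 5, and 8. Then η(s) has zero entries in coordinates 1, 4, 5, 8 for all s. -/
/-!
Let `P` be the coordinate projection onto the coordinates `{0, 3, 4, 7}`. The sparsity pattern of
`M₂` has no entry from the other coordinates into these, so every `M s` preserves `ker P`, hence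
`P M P = P M`. Then `y = P η` solves the linear equation `y' = P M(s) y` with `y 0 = 0`, and
Grönwall uniqueness on compact intervals, where `M` is bounded, gives `y ≡ 0`.
-/

open Matrix

open Set

section LinearODE

variable {E : Type*} [NormedAddCommGroup E] [NormedSpace ℝ E]

theorem linear_ODE_solution_eq_zero {A : ℝ → E →L[ℝ] E} (hA : Continuous A) {y : ℝ → E}
    (hy : ∀ t, HasDerivAt y (A t (y t)) t) {t₀ : ℝ} (hy₀ : y t₀ = 0) (t : ℝ) : y t = 0 := by
  set a := min t₀ t - 1
  set b := max t₀ t + 1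
  obtain ⟨K, hK⟩ := (isCompact_Icc (a := a) (b := b)).exists_bound_of_continuousOn hA.continuousOn
  have hlip : ∀ s ∈ Ioo a b, LipschitzOnWith K.toNNReal (A s) univ := fun s hs =>
    ((A s).lipschitz.weaken <| by
      rw [← NNReal.coe_le_coe, coe_nnnorm]
      exact (hK s (Ioo_subset_Icc_self hs)).trans (Real.le_coe_toNNReal K)).lipschitzOnWith
  have ht₀ : t₀ ∈ Ioo a b := ⟨by linarith [min_le_left t₀ t], by linarith [le_max_left t₀ t]⟩
  have ht : t ∈ Icc a b := ⟨by linarith [min_le_right t₀ t], by linarith [le_max_right t₀ t]⟩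
  exact ODE_solution_unique_of_mem_Icc (g := fun _ => 0) hlip ht₀
    (HasDerivAt.continuousOn fun s _ => hy s) (fun s _ => hy s) (fun _ _ => trivial)
    continuousOn_const (fun s _ => by simpa using hasDerivAt_const s (0 : E))
    (fun _ _ => trivial) hy₀ ht

theorem linear_ODE_solution_apply_eq_zero_of_ker_invariant {A : ℝ → E →L[ℝ] E}
    (hA : Continuous A) {P : E →L[ℝ] E} (hP : IsIdempotentElem P)
    (hPA : ∀ t x, P x = 0 → P (A t x) = 0) {y : ℝ → E} (hy : ∀ t, HasDerivAt y (A t (y t)) t)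
    {t₀ : ℝ} (hy₀ : P (y t₀) = 0) (t : ℝ) : P (y t) = 0 := by
  have hPAP : ∀ s x, P (A s x) = P (A s (P x)) := fun s x => by
    rw [← sub_eq_zero, ← map_sub, ← map_sub]
    refine hPA s _ ?_
    rw [map_sub, show P (P x) = P x from DFunLike.congr_fun hP.eq x, sub_self]
  refine linear_ODE_solution_eq_zero (A := fun s => P.comp (A s)) (y := fun s => P (y s))
    (continuous_const.clm_comp hA) (fun s => ?_) hy₀ t
  rw [ContinuousLinearMap.comp_apply, ← hPAP]
  exact P.hasFDerivAt.comp_hasDerivAt s (hy s)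

end LinearODE

section Coordinates

variable {n : Type*} [DecidableEq n]

noncomputable def Matrix.toCLM' [Fintype n] : Matrix n n ℝ →L[ℝ] (n → ℝ) →L[ℝ] (n → ℝ) :=
  LinearMap.toContinuousLinearMap
    (LinearMap.toContinuousLinearMap.toLinearMap ∘ₗ Matrix.toLin'.toLinearMap)

@[simp]
theorem Matrix.toCLM'_apply [Fintype n] (B : Matrix n n ℝ) (x : n → ℝ) :
    Matrix.toCLM' B x = B *ᵥ x :=
  rfl

def coordProj (s : Finset n) : (n → ℝ) →L[ℝ] (n → ℝ) :=
  ContinuousLinearMap.pi fun i => if i ∈ s then ContinuousLinearMap.proj i else 0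

theorem coordProj_apply (s : Finset n) (x : n → ℝ) (i : n) :
    coordProj s x i = if i ∈ s then x i else 0 := by
  by_cases hi : i ∈ s <;> simp [coordProj, hi]

theorem coordProj_eq_zero_iff {s : Finset n} {x : n → ℝ} :
    coordProj s x = 0 ↔ ∀ i ∈ s, x i = 0 := by
  simp [funext_iff, coordProj_apply]

theorem isIdempotentElem_coordProj (s : Finset n) : IsIdempotentElem (coordProj s) := by
  ext x i
  by_cases hi : i ∈ s <;> simp [coordProj_apply, hi]

theorem coordProj_mulVec_eq_zero [Fintype n] {B : Matrix n n ℝ} {s : Finset n}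
    (hB : ∀ i ∈ s, ∀ j ∉ s, B i j = 0) {x : n → ℝ} (hx : coordProj s x = 0) :
    coordProj s (B *ᵥ x) = 0 := by
  rw [coordProj_eq_zero_iff] at hx ⊢
  refine fun i hi => Finset.sum_eq_zero fun j _ => ?_
  by_cases hj : j ∈ s
  · simp [hx j hj]
  · simp [hB i hi j hj]

end Coordinates

theorem inM2.apply_eq_zero_of_mem_of_notMem {B : Matrix (Fin 8) (Fin 8) ℝ} (hB : inM2 B) :
    ∀ i ∈ ({0, 3, 4, 7} : Finset (Fin 8)), ∀ j ∉ ({0, 3, 4, 7} : Finset (Fin 8)), B i j = 0 := by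
  intro i hi j hj
  apply hB
  revert i j
  unfold allowPos
  decide

theorem stmt9 (M : ℝ → Matrix (Fin 8) (Fin 8) ℝ) (hMcont : Continuous M)
    (hM : ∀ s, inM2 (M s))
    (η : ℝ → (Fin 8 → ℝ))
    (hode : ∀ s, HasDerivAt η (M s *ᵥ η s) s)
    (h0 : η 0 0 = 0 ∧ η 0 3 = 0 ∧ η 0 4 = 0 ∧ η 0 7 = 0) :
    ∀ s, η s 0 = 0 ∧ η s 3 = 0 ∧ η s 4 = 0 ∧ η s 7 = 0 := by
  intro s
  have hη₀ : coordProj {0, 3, 4, 7} (η 0) = 0 := by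
    simpa [coordProj_eq_zero_iff] using h0
  have hη := linear_ODE_solution_apply_eq_zero_of_ker_invariant
    (Matrix.toCLM'.continuous.comp hMcont) (isIdempotentElem_coordProj _)
    (fun t _ => coordProj_mulVec_eq_zero (hM t).apply_eq_zero_of_mem_of_notMem) hode hη₀ s
  simpa [coordProj_eq_zero_iff] using hη
end
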